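/- Let G be a finite group with |G| ≥ 3, let m = |G|, and let d : End(G) → ℤ/m be a monoid homomorphism mapping into the multiplicative monoid. In the monoid M(G) = ⨿_{α ∈ End(G)} {x ∈ ℤ : x ≡ d(α) mod m}, the group of units is isomorphic to {α ∈ Aut(G) : d(α) = 1 or d(α) = -1 in ℤ/m}, where the unit corresponding to such α is the unique element of {±1} congruent to d(α) mod m in component M_α. -/

import Mathlib

/-!
A unit `(α, x)` of `M(G)` has invertible components, so `α ∈ Aut(G)` and `x = ±1` with
`x ≡ d α`. Conversely `(α⁻¹, x)` inverts `(α, x)`: as `x² = 1`, `x ≡ d α` forces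
`x ≡ d α⁻¹`. Since `1 ≢ -1 (mod m)` for `m ≥ 3`, the sign `x` is determined by `α`, so
projecting to the first component identifies the units with `{α ∈ Aut(G) | d α = ±1}`.
-/

/-- The space-form monoid `M(G,n)`: disjoint union over `α` in a monoid `M`
(e.g. `Monoid.End G`) of the residue classes `{x : ℤ | x ≡ d α mod m}`. -/
def SFM (M : Type*) [Monoid M] (m : ℕ) (d : M →* ZMod m) : Type _ :=
  Σ α : M, {x : ℤ // (x : ZMod m) = d α}

instance SFM.instMonoid (M : Type*) [Monoid M] (m : ℕ) (d : M →* ZMod m) :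
    Monoid (SFM M m d) where
  mul a b := ⟨a.1 * b.1, ⟨a.2.1 * b.2.1, by
    push_cast [a.2.2, b.2.2]; rw [← map_mul]⟩⟩
  one := ⟨1, ⟨1, by rw [Int.cast_one, map_one]⟩⟩
  mul_assoc a b c := by
    refine Sigma.ext (mul_assoc _ _ _) ?_
    rw [Subtype.heq_iff_coe_eq (fun t => by
      show (t : ZMod m) = d (a.1 * b.1 * c.1) ↔ (t : ZMod m) = d (a.1 * (b.1 * c.1))
      rw [mul_assoc])]
    exact mul_assoc _ _ _
  one_mul a := by
    refine Sigma.ext (one_mul _) ?_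
    rw [Subtype.heq_iff_coe_eq (fun t => by
      show (t : ZMod m) = d (1 * a.1) ↔ (t : ZMod m) = d a.1
      rw [one_mul])]
    exact one_mul _
  mul_one a := by
    refine Sigma.ext (mul_one _) ?_
    rw [Subtype.heq_iff_coe_eq (fun t => by
      show (t : ZMod m) = d (a.1 * 1) ↔ (t : ZMod m) = d a.1
      rw [mul_one])]
    exact mul_one _

theorem ZMod.intCast_units_injective {m : ℕ} [Fact (2 < m)] :
    Function.Injective fun ε : ℤˣ => ((ε : ℤ) : ZMod m) := by
  intro ε ε' h
  have := ZMod.neg_one_ne_one (n := m)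
  rcases Int.units_eq_one_or ε with rfl | rfl <;> rcases Int.units_eq_one_or ε' with rfl | rfl <;>
    simp_all [eq_comm]

def MulAut.mulEquivUnitsEnd (G : Type*) [Monoid G] : MulAut G ≃* (Monoid.End G)ˣ where
  toFun α := ⟨α.toMonoidHom, α.symm.toMonoidHom, MonoidHom.ext α.apply_symm_apply,
    MonoidHom.ext α.symm_apply_apply⟩
  invFun u := MonoidHom.toMulEquiv u.val u.inv u.inv_val u.val_inv
  left_inv _ := rfl
  right_inv _ := rfl
  map_mul' _ _ := rfl

namespace SFM

variable {M : Type*} [Monoid M] {m : ℕ} {d : M →* ZMod m}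

@[ext]
theorem ext {a b : SFM M m d} (h₁ : a.1 = b.1) (h₂ : a.2.1 = b.2.1) : a = b := by
  obtain ⟨α, x⟩ := a
  obtain ⟨β, y⟩ := b
  subst h₁
  exact congrArg _ (Subtype.ext h₂)

variable (M m d)

def fstHom : SFM M m d →* M where
  toFun a := a.1
  map_one' := rfl
  map_mul' _ _ := rfl

def intHom : SFM M m d →* ℤ where
  toFun a := a.2.1
  map_one' := rfl
  map_mul' _ _ := rfl

variable {M m d}

theorem intCast_units_intHom (u : (SFM M m d)ˣ) :
    ((Units.map (intHom M m d) u : ℤ) : ZMod m) = d (Units.map (fstHom M m d) u) :=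
  u.val.2.2

theorem units_val_snd_eq_one_or_neg_one (u : (SFM M m d)ˣ) :
    (u : SFM M m d).2.1 = 1 ∨ (u : SFM M m d).2.1 = -1 :=
  Int.isUnit_iff.mp (u.isUnit.map (intHom M m d))

theorem map_units_fstHom_eq_one_or_neg_one (u : (SFM M m d)ˣ) :
    d (Units.map (fstHom M m d) u) = 1 ∨ d (Units.map (fstHom M m d) u) = -1 := by
  rw [← intCast_units_intHom]
  rcases Int.units_eq_one_or (Units.map (intHom M m d) u) with h | h <;> simp [h]

theorem intCast_eq_map_inv {α : Mˣ} {ε : ℤˣ} (h : ((ε : ℤ) : ZMod m) = d α) :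
    ((ε : ℤ) : ZMod m) = d ↑α⁻¹ := by
  refine left_inv_eq_right_inv (a := ((ε : ℤ) : ZMod m)) ?_ ?_
  · rw [← Int.cast_mul, ← Units.val_mul, Int.units_mul_self, Units.val_one, Int.cast_one]
  · rw [h, ← map_mul, α.mul_inv, map_one]

def unitsMk (α : Mˣ) (ε : ℤˣ) (h : ((ε : ℤ) : ZMod m) = d α) : (SFM M m d)ˣ where
  val := ⟨α, ε, h⟩
  inv := ⟨↑α⁻¹, ε, intCast_eq_map_inv h⟩
  val_inv := ext α.mul_inv (Int.units_coe_mul_self ε)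
  inv_val := ext α.inv_mul (Int.units_coe_mul_self ε)

noncomputable def unitsEquiv [Fact (2 < m)] :
    (SFM M m d)ˣ ≃ {α : Mˣ // d α = 1 ∨ d α = -1} :=
  Equiv.ofBijective
    (fun u => ⟨Units.map (fstHom M m d) u, map_units_fstHom_eq_one_or_neg_one u⟩) <| by
    refine ⟨fun u v huv => ?_, fun ⟨α, hα⟩ => ?_⟩
    · have hfst : Units.map (fstHom M m d) u = Units.map (fstHom M m d) v :=
        congrArg Subtype.val huv
      have hint : Units.map (intHom M m d) u = Units.map (intHom M m d) v :=
        ZMod.intCast_units_injective (m := m) <| by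
          simp only [intCast_units_intHom, hfst]
      exact Units.ext (ext (congrArg Units.val hfst) (congrArg Units.val hint))
    · obtain ⟨ε, hε⟩ : ∃ ε : ℤˣ, ((ε : ℤ) : ZMod m) = d α := by
        rcases hα with h | h
        · exact ⟨1, by simp [h]⟩
        · exact ⟨-1, by simp [h]⟩
      exact ⟨unitsMk α ε hε, rfl⟩

end SFM

theorem spaceFormMonoid_units_general (G : Type*) [Group G]
    (h3 : 3 ≤ Nat.card G) (d : Monoid.End G →* ZMod (Nat.card G)) :
    ∃ e : (SFM (Monoid.End G) (Nat.card G) d)ˣ ≃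
        {α : MulAut G // d α.toMonoidHom = 1 ∨ d α.toMonoidHom = -1},
      (∀ u v : (SFM (Monoid.End G) (Nat.card G) d)ˣ,
          ((e (u * v) : MulAut G)) = (e u : MulAut G) * (e v : MulAut G)) ∧
      (∀ u : (SFM (Monoid.End G) (Nat.card G) d)ˣ,
          ((u : SFM (Monoid.End G) (Nat.card G) d)).1 = (e u : MulAut G).toMonoidHom ∧
          (((u : SFM (Monoid.End G) (Nat.card G) d)).2.1 = 1 ∨
            ((u : SFM (Monoid.End G) (Nat.card G) d)).2.1 = -1)) := by
  have : Fact (2 < Nat.card G) := ⟨h3⟩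
  let toUnitsEnd := MulAut.mulEquivUnitsEnd G
  let e : (SFM (Monoid.End G) (Nat.card G) d)ˣ ≃
      {α : MulAut G // d α.toMonoidHom = 1 ∨ d α.toMonoidHom = -1} :=
    SFM.unitsEquiv.trans (Equiv.subtypeEquiv toUnitsEnd.toEquiv fun _ => Iff.rfl).symm
  have he (u) : toUnitsEnd (e u) = Units.map (SFM.fstHom _ _ d) u :=
    toUnitsEnd.apply_symm_apply _
  refine ⟨e, fun u v => toUnitsEnd.injective ?_,
    fun u => ⟨?_, SFM.units_val_snd_eq_one_or_neg_one u⟩⟩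
  · rw [map_mul toUnitsEnd, he, he, he, map_mul]
  · exact congrArg Units.val (he u).symm

/-- For a finite group `G` with `|G| ≥ 3` and a monoid homomorphism
`d : End(G) → (ℤ/|G|, ×)`, the group of units of `M(G)` is isomorphic to
`{α ∈ Aut(G) | d α = ±1}`; the unit corresponding to `α` lies in component `M_α`
and its integer is the unique element of `{±1}` congruent to `d α` mod `|G|`. -/
theorem spaceFormMonoid_units (G : Type*) [Group G] [Finite G]
    (h3 : 3 ≤ Nat.card G) (d : Monoid.End G →* ZMod (Nat.card G)) :
    ∃ e : (SFM (Monoid.End G) (Nat.card G) d)ˣ ≃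
        {α : MulAut G // d α.toMonoidHom = 1 ∨ d α.toMonoidHom = -1},
      (∀ u v : (SFM (Monoid.End G) (Nat.card G) d)ˣ,
          ((e (u * v) : MulAut G)) = (e u : MulAut G) * (e v : MulAut G)) ∧
      (∀ u : (SFM (Monoid.End G) (Nat.card G) d)ˣ,
          ((u : SFM (Monoid.End G) (Nat.card G) d)).1 = (e u : MulAut G).toMonoidHom ∧
          (((u : SFM (Monoid.End G) (Nat.card G) d)).2.1 = 1 ∨
            ((u : SFM (Monoid.End G) (Nat.card G) d)).2.1 = -1)) :=
  spaceFormMonoid_units_general G h3 d
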